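/- Let 𝒜 and ℬ be disjoint families of nonempty subsets of [n], 𝔮 = Σ_{A ∈ 𝒜} 𝔰_A, and suppose every set composition of [n] lies in 𝒦 ∪ 𝒥, where 𝒦 = {π⃗ : some A ∈ 𝒜 has #A_π⃗ ≠ 1} and 𝒥 = {π⃗ : some B ∈ ℬ has #B_π⃗ = 1}. Then Σ_{𝒯 ⊆ ℬ} (−1)^{#𝒯} Ψ(𝔮 + Σ_{T ∈ 𝒯} 𝔰_T) = 0, where Ψ(𝔭) = Σ_{f 𝔭-generic} x_f is the chromatic quasisymmetric function. -/

import Mathlib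

open Pointwise
open scoped Classical

/-- The simplex `𝔰_A = conv{e_j : j ∈ A}` in `ℝⁿ`. -/
noncomputable def smplx {n : ℕ} (A : Finset (Fin n)) : Set (Fin n → ℝ) :=
  convexHull ℝ ((fun j => Pi.single j (1 : ℝ)) '' ↑A)

/-- The face of a polytope `S` minimizing the linear functional `F`. -/
def faceMin {n : ℕ} (S : Set (Fin n → ℝ)) (F : (Fin n → ℝ) → ℝ) : Set (Fin n → ℝ) :=
  {x ∈ S | ∀ y ∈ S, F x ≤ F y}

/-- A coloring `f : [n] → ℕ` is `𝔭`-generic if the face of `𝔭` minimizing the linear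
functional `x ↦ ∑ i, f i * x i` is a point. -/
def IsGeneric {n : ℕ} (P : Set (Fin n → ℝ)) (f : Fin n → ℕ) : Prop :=
  ∃ x : Fin n → ℝ, faceMin P (fun x => ∑ i, (f i : ℝ) * x i) = {x}

/-- The chromatic quasisymmetric function `Ψ(𝔭) = ∑_{f 𝔭-generic} x_f` of a polytope
`𝔭 ⊆ ℝⁿ`, as a power series: the coefficient of the monomial `d` is the number of
`𝔭`-generic colorings using each color `c` exactly `d c` times. -/
noncomputable def chromQ {n : ℕ} (P : Set (Fin n → ℝ)) : MvPowerSeries ℕ ℚ :=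
  fun d => (Nat.card {f : Fin n → ℕ // IsGeneric P f ∧
    ∀ c : ℕ, Nat.card {i : Fin n // f i = c} = d c} : ℚ)

/-- The set of minimizers of the coloring `f` on `A` is a singleton, i.e. `#A_π⃗(f) = 1`. -/
def UniqMinN {n : ℕ} (f : Fin n → ℕ) (A : Finset (Fin n)) : Prop :=
  ∃! j, j ∈ A ∧ ∀ k ∈ A, f j ≤ f k

/-!
The minimizing face of a Minkowski sum is the sum of the minimizing faces, and the face of `𝔰_A`
minimizing `f` is the simplex on the `f`-minimizers in `A`; hence `f` is generic for
`𝔮 + ∑_{T ∈ 𝒯} 𝔰_T` iff it is `𝔮`-generic and every `T ∈ 𝒯` has a unique `f`-minimizer.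
A fixed `𝔮`-generic coloring `f` is therefore counted exactly for the `𝒯` contained in
`ℬ_f = {B ∈ ℬ | #B_π⃗(f) = 1}`, and these contributions cancel because `ℬ_f` is nonempty by the
covering hypothesis.
-/

open Finset

namespace Set

variable {ι α : Type*} [AddCancelCommMonoid α]

lemma finsetSum_nonempty {s : Finset ι} {S : ι → Set α} (h : ∀ i ∈ s, (S i).Nonempty) :
    (∑ i ∈ s, S i).Nonempty := by
  induction s using Finset.cons_induction with
  | empty => exact ⟨0, zero_mem_zero⟩
  | cons i s hi ih =>
    rw [sum_cons]
    exact (h i (mem_cons_self i s)).add (ih fun j hj => h j (mem_cons_of_mem hj))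

lemma subsingleton_add_iff {S T : Set α} (hS : S.Nonempty) (hT : T.Nonempty) :
    (S + T).Subsingleton ↔ S.Subsingleton ∧ T.Subsingleton := by
  refine ⟨fun h => ⟨fun s hs s' hs' => ?_, fun t ht t' ht' => ?_⟩, ?_⟩
  · obtain ⟨t, ht⟩ := hT
    exact add_right_cancel (h (add_mem_add hs ht) (add_mem_add hs' ht))
  · obtain ⟨s, hs⟩ := hS
    exact add_left_cancel (h (add_mem_add hs ht) (add_mem_add hs ht'))
  · rintro ⟨hS, hT⟩ _ ⟨s, hs, t, ht, rfl⟩ _ ⟨s', hs', t', ht', rfl⟩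
    rw [hS hs hs', hT ht ht']

lemma subsingleton_finsetSum_iff {s : Finset ι} {S : ι → Set α} (h : ∀ i ∈ s, (S i).Nonempty) :
    (∑ i ∈ s, S i).Subsingleton ↔ ∀ i ∈ s, (S i).Subsingleton := by
  induction s using Finset.cons_induction with
  | empty => exact iff_of_true subsingleton_singleton (by simp)
  | cons i s hi ih =>
    have hs : ∀ j ∈ s, (S j).Nonempty := fun j hj => h j (mem_cons_of_mem hj)
    rw [sum_cons, subsingleton_add_iff (h i (mem_cons_self i s)) (finsetSum_nonempty hs), ih hs,
      forall_mem_cons]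

end Set

section Faces

variable {n : ℕ}

lemma faceMin_add (L : (Fin n → ℝ) →ₗ[ℝ] ℝ) (S T : Set (Fin n → ℝ)) :
    faceMin (S + T) L = faceMin S L + faceMin T L := by
  ext x
  constructor
  · rintro ⟨⟨s, hs, t, ht, rfl⟩, hmin⟩
    refine ⟨s, ⟨hs, fun s' hs' => ?_⟩, t, ⟨ht, fun t' ht' => ?_⟩, rfl⟩
    · simpa using hmin (s' + t) (Set.add_mem_add hs' ht)
    · simpa using hmin (s + t') (Set.add_mem_add hs ht')
  · rintro ⟨s, ⟨hs, hsmin⟩, t, ⟨ht, htmin⟩, rfl⟩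
    refine ⟨Set.add_mem_add hs ht, ?_⟩
    rintro _ ⟨s', hs', t', ht', rfl⟩
    simpa only [map_add] using add_le_add (hsmin s' hs') (htmin t' ht')

lemma faceMin_zero (L : (Fin n → ℝ) →ₗ[ℝ] ℝ) : faceMin 0 L = 0 := by
  ext x
  simp +contextual [faceMin, Set.mem_zero]

lemma faceMin_finsetSum {ι : Type*} (L : (Fin n → ℝ) →ₗ[ℝ] ℝ) (s : Finset ι)
    (S : ι → Set (Fin n → ℝ)) :
    faceMin (∑ i ∈ s, S i) L = ∑ i ∈ s, faceMin (S i) L := by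
  induction s using Finset.cons_induction with
  | empty => simp [faceMin_zero]
  | cons i s hi ih => rw [sum_cons, sum_cons, faceMin_add, ih]

lemma faceMin_convexHull (L : (Fin n → ℝ) →ₗ[ℝ] ℝ) (W : Finset (Fin n → ℝ)) :
    faceMin (convexHull ℝ (W : Set (Fin n → ℝ))) L = convexHull ℝ (faceMin W L) := by
  ext x
  constructor
  · rintro ⟨hx, hmin⟩
    obtain ⟨w, hw₀, hw₁, rfl⟩ := Finset.mem_convexHull.1 hx
    have hLx : L (W.centerMass w id) = ∑ y ∈ W, w y * L y := by
      simp [centerMass_eq_of_sum_1 _ _ hw₁, map_sum]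
    -- `L` at the centre of mass is the `w`-average of values `L y` that are all at least as
    -- large, so only minimizers can carry weight
    have hflat : ∀ y ∈ W, w y * (L y - L (W.centerMass w id)) = 0 := by
      refine (sum_eq_zero_iff_of_nonneg fun y hy => ?_).1 ?_
      · exact mul_nonneg (hw₀ y hy) (sub_nonneg.2 (hmin y (subset_convexHull ℝ _ hy)))
      · simp only [mul_sub, sum_sub_distrib, ← sum_mul, hw₁, one_mul, hLx, sub_self]
    rw [← centerMass_filter_ne_zero]
    refine centerMass_mem_convexHull _ (fun y hy => hw₀ y (mem_filter.1 hy).1)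
      (by rw [sum_filter_ne_zero, hw₁]; exact one_pos) fun y hy => ?_
    obtain ⟨hyW, hwy⟩ := mem_filter.1 hy
    have hLy : L y = L (W.centerMass w id) :=
      sub_eq_zero.1 ((mul_eq_zero.1 (hflat y hyW)).resolve_left hwy)
    exact ⟨hyW, fun z hz => hLy ▸ hmin z (subset_convexHull ℝ _ hz)⟩
  · intro hx
    obtain ⟨y₀, hy₀W, hy₀min⟩ := (convexHull_nonempty_iff.1 ⟨x, hx⟩)
    have hxle : L x ≤ L y₀ :=
      convexHull_min (fun y hy => hy.2 y₀ hy₀W) (convex_halfSpace_le L.isLinear _) hx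
    refine ⟨convexHull_mono (Set.sep_subset _ _) hx, fun z hz => hxle.trans ?_⟩
    exact convexHull_min hy₀min (convex_halfSpace_ge L.isLinear _) hz

end Faces

section Minimizers

variable {α β : Type*} [LinearOrder β]

def minimizers (f : α → β) (A : Finset α) : Finset α :=
  {j ∈ A | ∀ k ∈ A, f j ≤ f k}

lemma minimizers_nonempty (f : α → β) {A : Finset α} (hA : A.Nonempty) :
    (minimizers f A).Nonempty := by
  obtain ⟨j, hj, hmin⟩ := A.exists_min_image f hA
  exact ⟨j, mem_filter.2 ⟨hj, hmin⟩⟩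

lemma uniqMinN_iff_subsingleton {n : ℕ} (f : Fin n → ℕ) {A : Finset (Fin n)} (hA : A.Nonempty) :
    UniqMinN f A ↔ (minimizers f A : Set (Fin n)).Subsingleton := by
  have hmem : ∀ j, j ∈ minimizers f A ↔ j ∈ A ∧ ∀ k ∈ A, f j ≤ f k := fun _ => by
    simp [minimizers]
  simp only [UniqMinN, ← hmem]
  refine ⟨fun h => h.setSubsingleton, fun h => ?_⟩
  obtain ⟨j, hj⟩ := minimizers_nonempty f hA
  exact ⟨j, hj, fun k hk => h hk hj⟩

end Minimizers

section Simplices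

variable {n : ℕ}

noncomputable def colorFunctional (f : Fin n → ℕ) : (Fin n → ℝ) →ₗ[ℝ] ℝ :=
  dotProductBilin ℝ ℝ fun i => (f i : ℝ)

lemma isGeneric_iff_faceMin (P : Set (Fin n → ℝ)) (f : Fin n → ℕ) :
    IsGeneric P f ↔ ∃ x, faceMin P (colorFunctional f) = {x} :=
  Iff.rfl

lemma colorFunctional_single (f : Fin n → ℕ) (j : Fin n) :
    colorFunctional f (Pi.single j 1) = f j := by
  simp [colorFunctional]

lemma faceMin_smplx (f : Fin n → ℕ) (A : Finset (Fin n)) :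
    faceMin (smplx A) (colorFunctional f) = smplx (minimizers f A) := by
  rw [smplx, ← coe_image, faceMin_convexHull, smplx]
  congr 1
  ext x
  simp only [faceMin, coe_image, Set.mem_image, mem_coe, Set.mem_ofPred_eq,
    minimizers, mem_filter, forall_exists_index, and_imp, forall_apply_eq_imp_iff₂]
  constructor
  · rintro ⟨⟨j, hj, rfl⟩, hmin⟩
    exact ⟨j, ⟨hj, by simpa [colorFunctional_single] using hmin⟩, rfl⟩
  · rintro ⟨j, ⟨hj, hmin⟩, rfl⟩
    exact ⟨⟨j, hj, rfl⟩, by simpa [colorFunctional_single] using hmin⟩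

lemma smplx_nonempty {A : Finset (Fin n)} (hA : A.Nonempty) : (smplx A).Nonempty :=
  convexHull_nonempty_iff.2 ((coe_nonempty.2 hA).image _)

lemma single_one_injective : Function.Injective fun j : Fin n => (Pi.single j 1 : Fin n → ℝ) :=
  fun j k h => by simpa [Pi.single_apply, eq_comm] using congrFun h k

lemma smplx_subsingleton_iff (A : Finset (Fin n)) :
    (smplx A).Subsingleton ↔ (A : Set (Fin n)).Subsingleton := by
  rw [smplx, ← single_one_injective.subsingleton_image_iff]
  exact ⟨fun h => h.anti (subset_convexHull ℝ _),
    fun h => (h.convex (𝕜 := ℝ)).convexHull_eq.symm ▸ h⟩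

lemma isGeneric_sum_smplx_iff (𝒞 : Finset (Finset (Fin n))) (h𝒞 : ∀ A ∈ 𝒞, A.Nonempty)
    (f : Fin n → ℕ) :
    IsGeneric (∑ A ∈ 𝒞, smplx A) f ↔ ∀ A ∈ 𝒞, UniqMinN f A := by
  have hne : ∀ A ∈ 𝒞, (smplx (minimizers f A)).Nonempty :=
    fun A hA => smplx_nonempty (minimizers_nonempty f (h𝒞 A hA))
  simp only [isGeneric_iff_faceMin, faceMin_finsetSum, faceMin_smplx]
  rw [Set.exists_eq_singleton_iff_nonempty_subsingleton, Set.subsingleton_finsetSum_iff hne]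
  refine (and_iff_right (Set.finsetSum_nonempty hne)).trans (forall₂_congr fun A hA => ?_)
  rw [smplx_subsingleton_iff, uniqMinN_iff_subsingleton f (h𝒞 A hA)]

lemma isGeneric_add_sum_smplx_iff {𝒜 𝒯 : Finset (Finset (Fin n))} (hd : Disjoint 𝒜 𝒯)
    (h𝒜 : ∀ A ∈ 𝒜, A.Nonempty) (h𝒯 : ∀ T ∈ 𝒯, T.Nonempty) (f : Fin n → ℕ) :
    IsGeneric ((∑ A ∈ 𝒜, smplx A) + ∑ T ∈ 𝒯, smplx T) f ↔
      (∀ A ∈ 𝒜, UniqMinN f A) ∧ ∀ T ∈ 𝒯, UniqMinN f T := by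
  rw [← sum_union hd, isGeneric_sum_smplx_iff _ (forall_mem_union.2 ⟨h𝒜, h𝒯⟩), forall_mem_union]

end Simplices

section Counting

lemma sum_powerset_filter_forall_neg_one_pow {β R : Type*} [CommRing R] {ℬ : Finset β}
    {q : β → Prop} [DecidablePred q] (h : ∃ b ∈ ℬ, q b) :
    ∑ 𝒯 ∈ ℬ.powerset with ∀ b ∈ 𝒯, q b, (-1 : R) ^ #𝒯 = 0 := by
  obtain ⟨b, hb, hqb⟩ := h
  have hpowerset : {𝒯 ∈ ℬ.powerset | ∀ b ∈ 𝒯, q b} = (ℬ.filter q).powerset := by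
    ext 𝒯
    simp only [mem_filter, mem_powerset, subset_iff]
    exact ⟨fun h b hb => ⟨h.1 hb, h.2 b hb⟩,
      fun h => ⟨fun b hb => (h hb).1, fun b hb => (h hb).2⟩⟩
  rw [hpowerset]
  simpa using congrArg (Int.cast : ℤ → R)
    (sum_powerset_neg_one_pow_card_of_nonempty ⟨b, mem_filter.2 ⟨hb, hqb⟩⟩)

lemma sum_powerset_neg_one_pow_mul_card_filter {α β R : Type*} [CommRing R] (F : Finset α)
    (ℬ : Finset β) (p : α → Prop) (q : α → β → Prop) [DecidablePred p] [∀ a, DecidablePred (q a)]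
    (h : ∀ a ∈ F, p a → ∃ b ∈ ℬ, q a b) :
    ∑ 𝒯 ∈ ℬ.powerset, (-1 : R) ^ #𝒯 * #{a ∈ F | p a ∧ ∀ b ∈ 𝒯, q a b} = 0 := by
  simp only [natCast_card_filter, mul_sum]
  rw [sum_comm]
  refine sum_eq_zero fun a ha => ?_
  by_cases hp : p a
  · simp only [hp, true_and, mul_boole, ← sum_filter]
    exact sum_powerset_filter_forall_neg_one_pow (h a ha hp)
  · simp [hp]

variable {n : ℕ}

lemma finite_setOf_content (d : ℕ →₀ ℕ) :
    {f : Fin n → ℕ | ∀ c, Nat.card {i // f i = c} = d c}.Finite := by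
  refine (Fintype.piFinset fun _ => d.support).finite_toSet.subset fun f hf => ?_
  rw [mem_coe, Fintype.mem_piFinset]
  intro i
  have : Nonempty {i' // f i' = f i} := ⟨⟨i, rfl⟩⟩
  rw [Finsupp.mem_support_iff, ← hf (f i)]
  exact Nat.card_pos.ne'

noncomputable def coloringsWithContent (n : ℕ) (d : ℕ →₀ ℕ) : Finset (Fin n → ℕ) :=
  (finite_setOf_content d).toFinset

lemma coeff_chromQ (P : Set (Fin n → ℝ)) (d : ℕ →₀ ℕ) :
    MvPowerSeries.coeff d (chromQ P) = #{f ∈ coloringsWithContent n d | IsGeneric P f} := by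
  have hset : {f | IsGeneric P f ∧ ∀ c, Nat.card {i // f i = c} = d c} =
      ↑{f ∈ coloringsWithContent n d | IsGeneric P f} := by
    ext f
    simp [coloringsWithContent, and_comm]
  rw [MvPowerSeries.coeff_apply, chromQ, ← Set.ncard_coe_finset, ← hset, ← Nat.card_coe_set_eq]
  rfl

end Counting

/-- **modular relations on hypergraphic polytopes.** Let `𝒜, ℬ` be disjoint
families of nonempty subsets of `[n]` and `𝔮 = ∑_{A ∈ 𝒜} 𝔰_A`. If every set composition of
`[n]` (equivalently, every coloring `f : [n] → ℕ`) lies in `𝒦 ∪ 𝒥` — i.e. either some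
`A ∈ 𝒜` has non-singleton minima, or some `B ∈ ℬ` has singleton minima — then
`∑_{𝒯 ⊆ ℬ} (−1)^{#𝒯} Ψ(𝔮 + ∑_{T ∈ 𝒯} 𝔰_T) = 0`. -/
theorem stmt17 {n : ℕ} (𝒜 ℬ : Finset (Finset (Fin n)))
    (hd : Disjoint 𝒜 ℬ) (h𝒜 : ∀ A ∈ 𝒜, A.Nonempty) (hℬ : ∀ B ∈ ℬ, B.Nonempty)
    (hcover : ∀ f : Fin n → ℕ,
      (∃ A ∈ 𝒜, ¬ UniqMinN f A) ∨ ∃ B ∈ ℬ, UniqMinN f B) :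
    ∑ 𝒯 ∈ ℬ.powerset, ((-1 : ℚ) ^ 𝒯.card) •
        chromQ ((∑ A ∈ 𝒜, smplx A) + ∑ T ∈ 𝒯, smplx T) = 0 := by
  ext d
  simp only [map_sum, map_smul, coeff_chromQ, map_zero, smul_eq_mul]
  refine (sum_congr rfl fun 𝒯 h𝒯 => ?_).trans
    (sum_powerset_neg_one_pow_mul_card_filter (coloringsWithContent n d) ℬ
      (fun f => ∀ A ∈ 𝒜, UniqMinN f A) UniqMinN
      fun f _ hf => (hcover f).resolve_left fun ⟨A, hA, hnA⟩ => hnA (hf A hA))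
  have h𝒯ℬ := mem_powerset.1 h𝒯
  congr 3
  ext f
  simp only [mem_filter,
    isGeneric_add_sum_smplx_iff (hd.mono_right h𝒯ℬ) h𝒜 fun T hT => hℬ T (h𝒯ℬ hT)]
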